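/- Let 𝔄₁ and 𝔄₂ be τ-structures with A₁ = A₂, and let c be a nullary symbol of τ such that c^𝔄₁ = nil, R^𝔄₁ = R^𝔄₂ for all relation symbols R of τ, and d^𝔄₁ = d^𝔄₂ for all nullary symbols d ≠ c of τ. Let φ ∈ MSO(τ) and X ⊆ A₁. If eval(EMC(𝔄₁, X, φ)) ∈ {⊤, ⊥}, then A₁ ≠ ∅ and eval(EMC(𝔄₁, X, φ)) = eval(EMC(𝔄₂, X, φ)). -/

import Mathlib

namespace MSOG

attribute [local instance] Classical.propDecidable

/-! ### Players and vocabularies -/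

inductive Player where
  | falsifier
  | verifier
deriving DecidableEq

/-- A vocabulary: a finite set of relation symbol names and nullary symbol names.
Symbols are drawn from `ℕ`; the arity of relation symbols is given by a global
arity function `ar : ℕ → ℕ`. -/
structure Vocab where
  rels : Finset ℕ
  nulls : Finset ℕ

def Vocab.addRel (τ : Vocab) (R : ℕ) : Vocab := ⟨insert R τ.rels, τ.nulls⟩

def Vocab.addNul (τ : Vocab) (c : ℕ) : Vocab := ⟨τ.rels, insert c τ.nulls⟩

/-! ### Structures -/

/-- A (partially interpreted) structure: a finite universe of objects (⊆ ℕ),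
an interpretation of each relation symbol as a set of tuples (lists), and a
partial interpretation of nullary symbols (`none` = nil/uninterpreted). -/
structure Struc where
  voc : Vocab
  univ : Finset ℕ
  rel : ℕ → List ℕ → Prop
  nul : ℕ → Option ℕ

/-- Wellformedness of a structure w.r.t. the arity function: relations only
interpret relation symbols of the vocabulary by tuples of the right length over
the universe, and nullary symbols of the vocabulary by universe elements. -/
structure Struc.WF (ar : ℕ → ℕ) (A : Struc) : Prop where
  rel_wf : ∀ R t, A.rel R t → R ∈ A.voc.rels ∧ t.length = ar R ∧ ∀ x ∈ t, x ∈ A.univ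
  nul_wf : ∀ c x, A.nul c = some x → c ∈ A.voc.nulls ∧ x ∈ A.univ

def Struc.FullyInterpreted (A : Struc) : Prop := ∀ c ∈ A.voc.nulls, (A.nul c).isSome

/-- The set `c̄^𝔄` of values of the interpreted nullary symbols. -/
def Struc.nulValues (A : Struc) : Finset ℕ :=
  A.voc.nulls.biUnion fun c => (A.nul c).toFinset

/-- Induced substructure `𝔄[s]`. -/
def Struc.restrict (A : Struc) (s : Finset ℕ) : Struc where
  voc := A.voc
  univ := A.univ ∩ s
  rel := fun R t => A.rel R t ∧ ∀ x ∈ t, x ∈ s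
  nul := fun c =>
    match A.nul c with
    | some x => if x ∈ s then some x else none
    | none => none

/-- Expansion `(𝔄, u)` interpreting the nullary symbol `c` as `u` (possibly nil). -/
def Struc.addNul (A : Struc) (c : ℕ) (u : Option ℕ) : Struc where
  voc := A.voc.addNul c
  univ := A.univ
  rel := A.rel
  nul := fun d => if d = c then u else A.nul d

/-- Expansion `(𝔄, U)` interpreting the unary relation symbol `R` as `U ⊆ A`. -/
def Struc.addRel (A : Struc) (R : ℕ) (U : Finset ℕ) : Struc where
  voc := A.voc.addRel R
  univ := A.univ
  rel := fun S t => if S = R then ∃ x ∈ U, t = [x] else A.rel S t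
  nul := A.nul

/-- Expansion `(𝔄, U₁, …, U_l)` interpreting each unary relation symbol `R ∈ Rs`
as `U R ⊆ A`. -/
def Struc.addRels (A : Struc) (Rs : Finset ℕ) (U : ℕ → Finset ℕ) : Struc where
  voc := ⟨A.voc.rels ∪ Rs, A.voc.nulls⟩
  univ := A.univ
  rel := fun S t => if S ∈ Rs then ∃ x ∈ U S, t = [x] else A.rel S t
  nul := A.nul

/-- `h` is an isomorphism from `A` to `B`. -/
structure Iso (A B : Struc) (h : ℕ → ℕ) : Prop where
  voc_eq : A.voc = B.voc
  bij : Set.BijOn h ↑A.univ ↑B.univ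
  interp_iff : ∀ c ∈ A.voc.nulls, ((A.nul c).isSome ↔ (B.nul c).isSome)
  nul_map : ∀ c ∈ A.voc.nulls, ∀ x, A.nul c = some x → B.nul c = some (h x)
  rel_map : ∀ R ∈ A.voc.rels, ∀ t : List ℕ, (∀ x ∈ t, x ∈ A.univ) →
    (A.rel R t ↔ B.rel R (t.map h))

/-- Two structures are compatible: interpreted nullary symbols agree, and the
identity is an isomorphism between the substructures induced by the common part
of the universes. -/
def Compatible (A B : Struc) : Prop :=
  A.voc = B.voc ∧
  (∀ c x y, A.nul c = some x → B.nul c = some y → x = y) ∧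
  Iso (A.restrict (A.univ ∩ B.univ)) (B.restrict (A.univ ∩ B.univ)) id

/-- Union of two (compatible) structures. -/
def Struc.union (A B : Struc) : Struc where
  voc := A.voc
  univ := A.univ ∪ B.univ
  rel := fun R t => A.rel R t ∨ B.rel R t
  nul := fun c =>
    match A.nul c with
    | some x => some x
    | none => B.nul c

/-! ### MSO formulas -/

/-- MSO formulas in negation normal form. -/
inductive MSO where
  | atom (R : ℕ) (cs : List ℕ)
  | natom (R : ℕ) (cs : List ℕ)
  | conj (φ ψ : MSO)
  | disj (φ ψ : MSO)
  | fall (c : ℕ) (φ : MSO)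
  | fex (c : ℕ) (φ : MSO)
  | sall (R : ℕ) (φ : MSO)
  | sex (R : ℕ) (φ : MSO)
deriving DecidableEq

/-- `MSO.wf ar τ φ` means `φ ∈ MSO(τ)` (w.r.t. the arity function `ar`,
quantified symbols being fresh unary relation resp. nullary symbols). -/
def MSO.wf (ar : ℕ → ℕ) : Vocab → MSO → Prop
  | τ, .atom R cs => R ∈ τ.rels ∧ cs.length = ar R ∧ ∀ c ∈ cs, c ∈ τ.nulls
  | τ, .natom R cs => R ∈ τ.rels ∧ cs.length = ar R ∧ ∀ c ∈ cs, c ∈ τ.nulls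
  | τ, .conj φ ψ => MSO.wf ar τ φ ∧ MSO.wf ar τ ψ
  | τ, .disj φ ψ => MSO.wf ar τ φ ∧ MSO.wf ar τ ψ
  | τ, .fall c φ => c ∉ τ.nulls ∧ MSO.wf ar (τ.addNul c) φ
  | τ, .fex c φ => c ∉ τ.nulls ∧ MSO.wf ar (τ.addNul c) φ
  | τ, .sall R φ => R ∉ τ.rels ∧ ar R = 1 ∧ MSO.wf ar (τ.addRel R) φ
  | τ, .sex R φ => R ∉ τ.rels ∧ ar R = 1 ∧ MSO.wf ar (τ.addRel R) φ

/-- Quantifier rank. -/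
def MSO.qr : MSO → ℕ
  | .atom _ _ => 0
  | .natom _ _ => 0
  | .conj φ ψ => max φ.qr ψ.qr
  | .disj φ ψ => max φ.qr ψ.qr
  | .fall _ φ => φ.qr + 1
  | .fex _ φ => φ.qr + 1
  | .sall _ φ => φ.qr + 1
  | .sex _ φ => φ.qr + 1

/-- Length `‖φ‖` of (an encoding of) the formula. -/
def MSO.len : MSO → ℕ
  | .atom _ cs => 1 + cs.length
  | .natom _ cs => 1 + cs.length
  | .conj φ ψ => 1 + φ.len + ψ.len
  | .disj φ ψ => 1 + φ.len + ψ.len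
  | .fall _ φ => 1 + φ.len
  | .fex _ φ => 1 + φ.len
  | .sall _ φ => 1 + φ.len
  | .sex _ φ => 1 + φ.len

def MSO.IsAtomic : MSO → Prop
  | .atom _ _ | .natom _ _ => True
  | _ => False

def MSO.IsUniversal : MSO → Prop
  | .conj _ _ | .fall _ _ | .sall _ _ => True
  | _ => False

def MSO.IsExistential : MSO → Prop
  | .disj _ _ | .fex _ _ | .sex _ _ => True
  | _ => False

/-- Classical (Tarskian) satisfaction `𝔄 ⊨ φ`. -/
def Sat : Struc → MSO → Prop
  | A, .atom R cs => ∃ t, cs.mapM A.nul = some t ∧ A.rel R t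
  | A, .natom R cs => ∃ t, cs.mapM A.nul = some t ∧ ¬ A.rel R t
  | A, .conj φ ψ => Sat A φ ∧ Sat A ψ
  | A, .disj φ ψ => Sat A φ ∨ Sat A ψ
  | A, .fall c φ => ∀ a ∈ A.univ, Sat (A.addNul c (some a)) φ
  | A, .fex c φ => ∃ a ∈ A.univ, Sat (A.addNul c (some a)) φ
  | A, .sall R φ => ∀ U ⊆ A.univ, Sat (A.addRel R U) φ
  | A, .sex R φ => ∃ U ⊆ A.univ, Sat (A.addRel R U) φ

/-! ### Games -/

/-- A game, presented as its unfolding: either one of the two fixed games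
`⊤` (the verifier has a winning strategy) or `⊥` (the falsifier has a winning
strategy), or an initial position together with the player (if any) this
position is assigned to and the list of subgames reachable by the moves. -/
inductive Game (P : Type) where
  | top
  | bot
  | node (pos : P) (owner : Option Player) (subs : List (Game P))

theorem Game.sizeOf_lt_node {P : Type} [SizeOf P] {p : P} {o : Option Player}
    {s : List (Game P)} {g : Game P} (h : g ∈ s) :
    sizeOf g < sizeOf (Game.node p o s) := by
  have := List.sizeOf_lt_of_mem h
  simp only [Game.node.sizeOf_spec]
  omega

/-- The evaluation algorithm: returns `⊤` if the verifier has a winning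
strategy, `⊥` if the falsifier has one, and otherwise the unfolded game
recording the drawn plays. -/
noncomputable def Game.eval {P : Type} : Game P → Game P
  | .top => .top
  | .bot => .bot
  | .node p o subs =>
    let es := subs.attach.map fun g => Game.eval g.1
    match o with
    | some .falsifier =>
      if ∀ g ∈ es, g = Game.top then Game.top
      else if Game.bot ∈ es then Game.bot
      else Game.node p o es
    | some .verifier =>
      if ∀ g ∈ es, g = Game.bot then Game.bot
      else if Game.top ∈ es then Game.top
      else Game.node p o es
    | none => Game.node p o es
termination_by g => sizeOf g
decreasing_by
  exact Game.sizeOf_lt_node g.2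

/-- Equivalence of games, relative to an equivalence `pe` on positions:
the initial positions are equivalent (with equal assignment to players) and
there is a bijection `e` between the sets of subgames such that each subgame is
equivalent to its image. -/
def GEquiv {P : Type} (pe : P → P → Prop) : Game P → Game P → Prop
  | .top, .top => True
  | .bot, .bot => True
  | .node p o s, .node q o' t =>
    pe p q ∧ o = o' ∧
    ∃ e : {g // g ∈ s} ≃ {g // g ∈ t}, ∀ g : {g // g ∈ s}, GEquiv pe g.1 (e g).1
  | _, _ => False
termination_by g _ => sizeOf g
decreasing_by
  exact Game.sizeOf_lt_node g.2

/-- Number of positions of a game. -/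
def Game.size {P : Type} : Game P → ℕ
  | .top => 1
  | .bot => 1
  | .node _ _ subs => 1 + (subs.attach.map fun g => Game.size g.1).sum
termination_by g => sizeOf g
decreasing_by
  exact Game.sizeOf_lt_node g.2

/-! ### Model checking games -/

/-- Positions of extended model checking games: a structure, the current set
`X`, and a formula. -/
abbrev EPos : Type := Struc × Finset ℕ × MSO

/-- Positions of classical model checking games. -/
abbrev CPos : Type := Struc × MSO

/-- Equivalence of positions: same `X ⊆ H₁ ∩ H₂`, same formula, and an
isomorphism between the structures fixing `X` pointwise. -/
def PosEquivE (p q : EPos) : Prop :=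
  p.2.1 = q.2.1 ∧ p.2.2 = q.2.2 ∧
  p.2.1 ⊆ p.1.univ ∧ p.2.1 ⊆ q.1.univ ∧
  ∃ h : ℕ → ℕ, Iso p.1 q.1 h ∧ ∀ a ∈ p.2.1, h a = a

/-- Equivalence `≅` of extended model checking games. -/
def GEquivE : Game EPos → Game EPos → Prop := GEquiv PosEquivE

/-- The extended model checking game `EMC(𝔄, X, φ)` (argument order:
formula, structure, set). -/
noncomputable def EMC : MSO → Struc → Finset ℕ → Game EPos
  | .atom R cs, A, X =>
    Game.node (A.restrict (X ∪ A.nulValues), X, .atom R cs)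
      (if ∀ c ∈ cs, (A.nul c).isSome then
        (if Sat A (.atom R cs) then some .falsifier else some .verifier)
       else none) []
  | .natom R cs, A, X =>
    Game.node (A.restrict (X ∪ A.nulValues), X, .natom R cs)
      (if ∀ c ∈ cs, (A.nul c).isSome then
        (if Sat A (.natom R cs) then some .falsifier else some .verifier)
       else none) []
  | .conj φ ψ, A, X =>
    Game.node (A.restrict (X ∪ A.nulValues), X, .conj φ ψ) (some .falsifier)
      [EMC φ A X, EMC ψ A X]
  | .disj φ ψ, A, X =>
    Game.node (A.restrict (X ∪ A.nulValues), X, .disj φ ψ) (some .verifier)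
      [EMC φ A X, EMC ψ A X]
  | .fall c φ, A, X =>
    Game.node (A.restrict (X ∪ A.nulValues), X, .fall c φ) (some .falsifier)
      ((none :: A.univ.toList.map some).map fun u => EMC φ (A.addNul c u) X)
  | .fex c φ, A, X =>
    Game.node (A.restrict (X ∪ A.nulValues), X, .fex c φ) (some .verifier)
      ((none :: A.univ.toList.map some).map fun u => EMC φ (A.addNul c u) X)
  | .sall R φ, A, X =>
    Game.node (A.restrict (X ∪ A.nulValues), X, .sall R φ) (some .falsifier)
      (A.univ.powerset.toList.map fun U => EMC φ (A.addRel R U) X)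
  | .sex R φ, A, X =>
    Game.node (A.restrict (X ∪ A.nulValues), X, .sex R φ) (some .verifier)
      (A.univ.powerset.toList.map fun U => EMC φ (A.addRel R U) X)

/-- The classical model checking game `MC(𝔄, φ)` (argument order:
formula, structure); object quantifiers move only to elements of the universe
(no nil moves). -/
noncomputable def MC : MSO → Struc → Game CPos
  | .atom R cs, A =>
    Game.node (A.restrict A.nulValues, .atom R cs)
      (if Sat A (.atom R cs) then some .falsifier else some .verifier) []
  | .natom R cs, A =>
    Game.node (A.restrict A.nulValues, .natom R cs)
      (if Sat A (.natom R cs) then some .falsifier else some .verifier) []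
  | .conj φ ψ, A =>
    Game.node (A.restrict A.nulValues, .conj φ ψ) (some .falsifier)
      [MC φ A, MC ψ A]
  | .disj φ ψ, A =>
    Game.node (A.restrict A.nulValues, .disj φ ψ) (some .verifier)
      [MC φ A, MC ψ A]
  | .fall c φ, A =>
    Game.node (A.restrict A.nulValues, .fall c φ) (some .falsifier)
      (A.univ.toList.map fun a => MC φ (A.addNul c (some a)))
  | .fex c φ, A =>
    Game.node (A.restrict A.nulValues, .fex c φ) (some .verifier)
      (A.univ.toList.map fun a => MC φ (A.addNul c (some a)))
  | .sall R φ, A =>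
    Game.node (A.restrict A.nulValues, .sall R φ) (some .falsifier)
      (A.univ.powerset.toList.map fun U => MC φ (A.addRel R U))
  | .sex R φ, A =>
    Game.node (A.restrict A.nulValues, .sex R φ) (some .verifier)
      (A.univ.powerset.toList.map fun U => MC φ (A.addRel R U))

/-! ### The algorithms reduce, convert, forget, combine -/

/-- Remove subgames that are equivalent (`≅`) to an already kept one. -/
noncomputable def dedupEquiv : List (Game EPos) → List (Game EPos)
  | [] => []
  | g :: gs =>
    let r := dedupEquiv gs
    if ∃ g' ∈ r, GEquivE g g' then r else g :: r

/-- The algorithm `reduce`. -/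
noncomputable def reduce : Game EPos → Game EPos
  | .top => .top
  | .bot => .bot
  | .node p o subs =>
    if p.2.2.IsAtomic then Game.eval (Game.node p o subs)
    else
      let rs := subs.attach.map fun g => reduce g.1
      if p.2.2.IsUniversal ∧ Game.bot ∈ rs then Game.bot
      else if p.2.2.IsExistential ∧ Game.top ∈ rs then Game.top
      else
        let kept := dedupEquiv (rs.filter fun g => decide (g ≠ Game.top ∧ g ≠ Game.bot))
        if kept = [] then Game.eval (Game.node p o ([] : List (Game EPos)))
        else Game.node p o kept
termination_by g => sizeOf g
decreasing_by
  exact Game.sizeOf_lt_node g.2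

/-- Whether a game is a node whose position's structure is fully interpreted. -/
def Game.IsFullNodeE : Game EPos → Prop
  | .node q _ _ => q.1.FullyInterpreted
  | _ => False

/-- The algorithm `convert`, turning an extended model checking game into a
classical model checking game by keeping exactly the subgames whose position's
structure is fully interpreted. -/
noncomputable def convert : Game EPos → Game CPos
  | .top => .top
  | .bot => .bot
  | .node p o subs =>
    Game.node (p.1.restrict p.1.nulValues, p.2.2) o
      (subs.attach.filterMap fun g =>
        if g.1.IsFullNodeE then some (convert g.1) else none)
termination_by g => sizeOf g
decreasing_by
  exact Game.sizeOf_lt_node g.2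

/-- The algorithm `forget(𝒢, x)`. -/
noncomputable def forget : Game EPos → ℕ → Game EPos
  | .top, _ => .top
  | .bot, _ => .bot
  | .node p o subs, x =>
    let H := p.1
    let p' : EPos :=
      if ∃ c ∈ H.voc.nulls, H.nul c = some x then (H, p.2.1.erase x, p.2.2)
      else (H.restrict (H.univ.erase x), p.2.1.erase x, p.2.2)
    reduce (Game.node p' o (subs.attach.map fun g => forget g.1 x))
termination_by g _ => sizeOf g
decreasing_by
  exact Game.sizeOf_lt_node g.2

/-- A pair of subgames that `combine` recurses on: both are nodes with the same
principal subformula and compatible structures. -/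
def PairOk : Game EPos → Game EPos → Prop
  | .node p _ _, .node q _ _ => p.2.2 = q.2.2 ∧ Compatible p.1 q.1
  | _, _ => False

/-- The algorithm `combine(𝒢₁, 𝒢₂)`. -/
noncomputable def combine : Game EPos → Game EPos → Game EPos
  | .node p1 o1 s1, .node p2 _ s2 =>
    reduce (Game.node (p1.1.union p2.1, p1.2.1 ∪ p2.2.1, p1.2.2) o1
      ((s1.attach.flatMap fun g1 => s2.attach.map fun g2 => (g1, g2)).filterMap
        fun gg => if PairOk gg.1.1 gg.2.1 then some (combine gg.1.1 gg.2.1) else none))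
  | g, _ => g
termination_by g1 g2 => sizeOf g1 + sizeOf g2
decreasing_by
  have h1 := List.sizeOf_lt_of_mem gg.1.2
  have h2 := List.sizeOf_lt_of_mem gg.2.2
  simp only [Game.node.sizeOf_spec]
  omega

/-! ### Iterated exponentials and minima -/

/-- `iterexp t x = exp^t(x)`, the `t`-fold iterated exponential. -/
def iterexp : ℕ → ℕ → ℕ
  | 0, x => x
  | t + 1, x => 2 ^ iterexp t x

/-- `r` is the minimum of the set `V ⊆ ℤ`, in `WithTop ℤ` (with `min ∅ = ⊤`). -/
def IsMinZ (r : WithTop ℤ) (V : Set ℤ) : Prop :=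
  (∀ v ∈ V, r ≤ (v : WithTop ℤ)) ∧ (V = ∅ → r = ⊤) ∧
  (V.Nonempty → ∃ v ∈ V, r = (v : WithTop ℤ))

/-- `r` is the minimum of the set `V ⊆ WithTop ℤ` (with `min ∅ = ⊤`). -/
def IsMinW (r : WithTop ℤ) (V : Set (WithTop ℤ)) : Prop :=
  (∀ v ∈ V, r ≤ v) ∧ (V = ∅ → r = ⊤) ∧ (V.Nonempty → r ∈ V)

/-! ### Tree decompositions -/

/-- Rooted trees with bags at the nodes. -/
inductive RTree where
  | node (bag : Finset ℕ) (children : List RTree)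

theorem RTree.sizeOf_lt_node {b : Finset ℕ} {cs : List RTree} {c : RTree}
    (h : c ∈ cs) : sizeOf c < sizeOf (RTree.node b cs) := by
  have := List.sizeOf_lt_of_mem h
  simp only [RTree.node.sizeOf_spec]
  omega

def RTree.bag : RTree → Finset ℕ
  | .node b _ => b

/-- The subtree at an address (a node of the tree is identified with the list
of child indices leading to it from the root). -/
def RTree.subtreeAt : RTree → List ℕ → Option RTree
  | t, [] => some t
  | .node _ cs, i :: is =>
    match cs[i]? with
    | some c => c.subtreeAt is
    | none => none

/-- The bag at an address. -/
def RTree.bagAt (t : RTree) (p : List ℕ) : Option (Finset ℕ) :=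
  (t.subtreeAt p).map RTree.bag

/-- All objects occurring in bags of the tree (`Aᵢ` for the subtree at `i`). -/
def RTree.allObjs : RTree → Finset ℕ
  | .node b cs => b ∪ (cs.attach.map fun c => RTree.allObjs c.1).foldr (· ∪ ·) ∅
termination_by t => sizeOf t
decreasing_by
  exact RTree.sizeOf_lt_node c.2

/-- The number of nodes `|T|` of the tree. -/
def RTree.count : RTree → ℕ
  | .node _ cs => 1 + (cs.attach.map fun c => RTree.count c.1).sum
termination_by t => sizeOf t
decreasing_by
  exact RTree.sizeOf_lt_node c.2

/-- Longest common prefix of two addresses. -/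
def lcp : List ℕ → List ℕ → List ℕ
  | a :: as, b :: bs => if a = b then a :: lcp as bs else []
  | _, _ => []

/-- `(𝒯, 𝒳)` (coded as a single bag-labelled rooted tree) is a tree
decomposition of the relational structure `A`: bags are subsets of the universe
covering it, every tuple of every relation is contained in some bag, and if `r`
lies on the path between `p` and `q` then `X_p ∩ X_q ⊆ X_r`. -/
structure IsTreeDecomp (A : Struc) (t : RTree) : Prop where
  bags_sub : ∀ p b, t.bagAt p = some b → b ⊆ A.univ
  covers : ∀ a ∈ A.univ, ∃ p b, t.bagAt p = some b ∧ a ∈ b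
  rel_covers : ∀ R tup, A.rel R tup → ∃ p b, t.bagAt p = some b ∧ ∀ x ∈ tup, x ∈ b
  connected : ∀ p q r bp bq br, t.bagAt p = some bp → t.bagAt q = some bq →
    t.bagAt r = some br → lcp p q <+: r → (r <+: p ∨ r <+: q) → bp ∩ bq ⊆ br

/-- The width of the tree decomposition is at most `w`: every bag has at most
`w + 1` elements. -/
def TDWidthLE (t : RTree) (w : ℕ) : Prop :=
  ∀ p b, t.bagAt p = some b → b.card ≤ w + 1

/-- A node of a nice tree decomposition is a leaf (singleton bag), an introduce
node, a forget node, or a join node. -/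
def RTree.NiceStep : RTree → Prop
  | .node b [] => ∃ x, b = {x}
  | .node b [c] =>
      (∃ x, x ∉ c.allObjs ∧ b = insert x c.bag) ∨ (∃ x ∈ c.bag, b = c.bag.erase x)
  | .node b [c₁, c₂] => b = c₁.bag ∧ b = c₂.bag
  | .node _ _ => False

/-- A nice tree decomposition: every node is a leaf, introduce, forget, or join
node. -/
def RTree.Nice (t : RTree) : Prop := ∀ p s, t.subtreeAt p = some s → s.NiceStep

/-! ### The dynamic programming algorithm -/

/-- `ValidAssign Rbar X U`: `U` is an assignment `(U₁, …, U_l)` of subsets of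
`X` to the free unary relation symbols in `Rbar` (normalized to `∅` outside
`Rbar`). -/
def ValidAssign (Rbar X : Finset ℕ) (U : ℕ → Finset ℕ) : Prop :=
  (∀ R ∈ Rbar, U R ⊆ X) ∧ ∀ R ∉ Rbar, U R = ∅

/-- `W` matches `U` on the bag `Xi` (componentwise). -/
def Matches (Rbar Xi : Finset ℕ) (W U : ℕ → Finset ℕ) : Prop :=
  ∀ R ∈ Rbar, W R ∩ Xi = U R

/-- The reduced extended model checking game of the `τ`-expansion of `B`
by the assignment `W`. -/
noncomputable def RED (φ : MSO) (Rbar : Finset ℕ) (B : Struc) (Xi : Finset ℕ)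
    (W : ℕ → Finset ℕ) : Game EPos :=
  reduce (EMC φ (B.addRels Rbar W) Xi)

/-- The value `valᵢ(ℛ)` should be the minimum of `Σ αₖ |R_k^{𝔄ᵢ'} ∖ Xᵢ|` over
the matching expansions equivalent to `ℛ`; this is the summand for one `W`. -/
def cost (α : ℕ → ℤ) (Rbar : Finset ℕ) (X : Finset ℕ) (W : ℕ → Finset ℕ) : ℤ :=
  ∑ R ∈ Rbar, α R * (((W R) \ X).card : ℤ)

/-- Invariant 12 at a node with substructure `Ai` and bag `Xi`, for the
table `S` and values `val`. -/
def Invariant (φ : MSO) (α : ℕ → ℤ) (Rbar : Finset ℕ) (Ai : Struc) (Xi : Finset ℕ)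
    (S : (ℕ → Finset ℕ) → Set (Game EPos)) (val : Game EPos → WithTop ℤ) : Prop :=
  ∀ U, ValidAssign Rbar Xi U →
    ((∀ W, ValidAssign Rbar Ai.univ W → Matches Rbar Xi W U →
        RED φ Rbar Ai Xi W ≠ Game.bot →
        ∃! G, G ∈ S U ∧ GEquivE G (RED φ Rbar Ai Xi W)) ∧
     (∀ G ∈ S U, G ≠ Game.bot ∧
        ∃ W, ValidAssign Rbar Ai.univ W ∧ Matches Rbar Xi W U ∧
          GEquivE (RED φ Rbar Ai Xi W) G) ∧
     (∀ G ∈ S U, IsMinZ (val G)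
        {v : ℤ | ∃ W, ValidAssign Rbar Ai.univ W ∧ Matches Rbar Xi W U ∧
           GEquivE (RED φ Rbar Ai Xi W) G ∧ RED φ Rbar Ai Xi W ≠ Game.bot ∧
           v = cost α Rbar Xi W}))

end MSOG

/-!
A literal position mentioning an uninterpreted nullary symbol is assigned to no player, so the
plays through it are drawn. Hence, when `EMC(𝔄₁, X, φ)` is decided, its value is settled by
literals all of whose symbols are interpreted, and a decided node keeps its value when each
subgame is replaced by one with the same value whenever the original is decided. Quantifiers bind
fresh symbols, so `c` stays uninterpreted along the game, the settling literals avoid `c`, and on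
them `𝔄₁` and `𝔄₂` agree. Such a literal has positive arity, so it interprets some nullary symbol,
whose value lies in the universe.
-/

namespace MSOG

attribute [local instance] Classical.propDecidable

theorem _root_.List.mapM_congr {m : Type → Type} [Monad m] [LawfulMonad m] {α β : Type}
    {f g : α → m β} {l : List α} (h : ∀ x ∈ l, f x = g x) : l.mapM f = l.mapM g := by
  induction l with
  | nil => rfl
  | cons a l ih =>
    simp only [List.mapM_cons, h a List.mem_cons_self,
      ih fun x hx => h x (List.mem_cons_of_mem _ hx)]

namespace Game

variable {P : Type}

def Decided (g : Game P) : Prop := g.eval = top ∨ g.eval = bot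

theorem eval_node_none (p : P) (s : List (Game P)) :
    (node p none s).eval = node p none (s.map eval) := by
  rw [eval]; simp

theorem not_decided_node_none (p : P) (s : List (Game P)) : ¬ (node p none s).Decided := by
  simp [Decided, eval_node_none]

theorem eval_falsifier_eq_top_iff {p : P} {s : List (Game P)} :
    (node p (some .falsifier) s).eval = top ↔ ∀ g ∈ s, g.eval = top := by
  rw [eval]; simp only [List.forall_mem_map]
  split_ifs <;> simp_all

theorem eval_falsifier_eq_bot_iff {p : P} {s : List (Game P)} :
    (node p (some .falsifier) s).eval = bot ↔ ∃ g ∈ s, g.eval = bot := by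
  rw [eval]; simp only [List.forall_mem_map]
  split_ifs <;> simp_all

theorem eval_verifier_eq_bot_iff {p : P} {s : List (Game P)} :
    (node p (some .verifier) s).eval = bot ↔ ∀ g ∈ s, g.eval = bot := by
  rw [eval]; simp only [List.forall_mem_map]
  split_ifs <;> simp_all

theorem eval_verifier_eq_top_iff {p : P} {s : List (Game P)} :
    (node p (some .verifier) s).eval = top ↔ ∃ g ∈ s, g.eval = top := by
  rw [eval]; simp only [List.forall_mem_map]
  split_ifs <;> simp_all

theorem eval_node_nil_congr (p₁ p₂ : P) (o : Player) :
    (node p₁ (some o) []).eval = (node p₂ (some o) []).eval := by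
  cases o <;> rw [eval, eval] <;> simp

theorem Decided.exists_mem_of_node {ι : Type} {p : P} {o : Player} {l : List ι}
    {f : ι → Game P} (hl : l ≠ []) (h : (node p (some o) (l.map f)).Decided) :
    ∃ i ∈ l, (f i).Decided := by
  obtain ⟨i₀, hi₀⟩ := List.exists_mem_of_ne_nil l hl
  cases o <;> rcases h with h | h <;>
    simp only [eval_falsifier_eq_top_iff, eval_falsifier_eq_bot_iff, eval_verifier_eq_top_iff,
      eval_verifier_eq_bot_iff, List.forall_mem_map] at h
  · exact ⟨i₀, hi₀, .inl (h i₀ hi₀)⟩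
  · obtain ⟨_, hg, hb⟩ := h
    obtain ⟨i, hi, rfl⟩ := List.mem_map.1 hg
    exact ⟨i, hi, .inr hb⟩
  · obtain ⟨_, hg, ht⟩ := h
    obtain ⟨i, hi, rfl⟩ := List.mem_map.1 hg
    exact ⟨i, hi, .inl ht⟩
  · exact ⟨i₀, hi₀, .inr (h i₀ hi₀)⟩

theorem eval_node_map_congr {ι : Type} {p₁ p₂ : P} {o : Player} {l : List ι}
    {f₁ f₂ : ι → Game P} (hf : ∀ i ∈ l, (f₁ i).Decided → (f₂ i).eval = (f₁ i).eval)
    (h : (node p₁ (some o) (l.map f₁)).Decided) :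
    (node p₂ (some o) (l.map f₂)).eval = (node p₁ (some o) (l.map f₁)).eval := by
  cases o <;> rcases h with h | h <;> rw [h] <;>
    simp only [eval_falsifier_eq_top_iff, eval_falsifier_eq_bot_iff, eval_verifier_eq_top_iff,
      eval_verifier_eq_bot_iff, List.forall_mem_map] at h ⊢
  · exact fun i hi => (hf i hi (.inl (h i hi))).trans (h i hi)
  · obtain ⟨_, hg, hb⟩ := h
    obtain ⟨i, hi, rfl⟩ := List.mem_map.1 hg
    exact ⟨f₂ i, List.mem_map_of_mem hi, (hf i hi (.inr hb)).trans hb⟩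
  · obtain ⟨_, hg, ht⟩ := h
    obtain ⟨i, hi, rfl⟩ := List.mem_map.1 hg
    exact ⟨f₂ i, List.mem_map_of_mem hi, (hf i hi (.inl ht)).trans ht⟩
  · exact fun i hi => (hf i hi (.inr (h i hi))).trans (h i hi)

end Game

open Game

structure NulExtension (τ : Vocab) (c : ℕ) (A₁ A₂ : Struc) : Prop where
  nul_self : A₁.nul c = none
  univ_eq : A₁.univ = A₂.univ
  rel_eq : ∀ R ∈ τ.rels, A₁.rel R = A₂.rel R
  nul_eq : ∀ d ∈ τ.nulls, d ≠ c → A₁.nul d = A₂.nul d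

namespace NulExtension

variable {τ : Vocab} {c : ℕ} {A₁ A₂ : Struc}

theorem addNul (h : NulExtension τ c A₁ A₂) {d : ℕ} (hdc : d ≠ c) (u : Option ℕ) :
    NulExtension (τ.addNul d) c (A₁.addNul d u) (A₂.addNul d u) where
  nul_self := by simp [Struc.addNul, hdc.symm, h.nul_self]
  univ_eq := h.univ_eq
  rel_eq := h.rel_eq
  nul_eq e he hec := by
    by_cases hed : e = d
    · simp [Struc.addNul, hed]
    · simp only [Struc.addNul, if_neg hed]
      exact h.nul_eq e ((Finset.mem_insert.1 he).resolve_left hed) hec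

theorem addRel (h : NulExtension τ c A₁ A₂) (R : ℕ) (U : Finset ℕ) :
    NulExtension (τ.addRel R) c (A₁.addRel R U) (A₂.addRel R U) where
  nul_self := h.nul_self
  univ_eq := h.univ_eq
  rel_eq S hS := by
    by_cases hSR : S = R
    · simp [Struc.addRel, hSR]
    · simp only [Struc.addRel, if_neg hSR]
      rw [h.rel_eq S ((Finset.mem_insert.1 hS).resolve_left hSR)]
  nul_eq := h.nul_eq

theorem eval_EMC_eq {ar : ℕ → ℕ} (h : NulExtension τ c A₁ A₂) (hc : c ∈ τ.nulls)
    {φ : MSO} (hφ : φ.wf ar τ) (X : Finset ℕ) (hdet : (EMC φ A₁ X).Decided) :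
    (EMC φ A₂ X).eval = (EMC φ A₁ X).eval := by
  induction φ generalizing τ A₁ A₂ with
  | atom R cs | natom R cs =>
    obtain ⟨hR, -, hcs⟩ := hφ
    simp only [EMC] at hdet ⊢
    by_cases hint : ∀ d ∈ cs, (A₁.nul d).isSome
    swap
    · exact absurd hdet (by rw [if_neg hint]; exact not_decided_node_none _ _)
    have hagree : ∀ d ∈ cs, A₁.nul d = A₂.nul d := fun d hd =>
      h.nul_eq d (hcs d hd) fun hdc => by simpa [hdc, h.nul_self] using hint d hd
    have hint₂ : ∀ d ∈ cs, (A₂.nul d).isSome := fun d hd => hagree d hd ▸ hint d hd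
    rw [if_pos hint, if_pos hint₂]
    split_ifs with hs₂ hs₁ hs₁ <;> try exact eval_node_nil_congr _ _ _
    all_goals simp only [Sat, List.mapM_congr hagree, h.rel_eq R hR] at hs₁ hs₂; contradiction
  | conj φ ψ ihφ ihψ | disj φ ψ ihφ ihψ =>
    refine eval_node_map_congr (l := [φ, ψ]) (f₁ := (EMC · A₁ X)) (f₂ := (EMC · A₂ X)) ?_ hdet
    simp only [List.mem_cons, List.not_mem_nil, or_false]
    rintro χ (rfl | rfl)
    exacts [ihφ h hc hφ.1, ihψ h hc hφ.2]
  | fall d φ ih | fex d φ ih =>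
    have hdc : d ≠ c := fun hdc => hφ.1 (hdc ▸ hc)
    simp only [EMC, ← h.univ_eq] at hdet ⊢
    exact eval_node_map_congr
      (fun u _ => ih (h.addNul hdc u) (Finset.mem_insert_of_mem hc) hφ.2) hdet
  | sall R φ ih | sex R φ ih =>
    simp only [EMC, ← h.univ_eq] at hdet ⊢
    exact eval_node_map_congr (fun U _ => ih (h.addRel R U) hc hφ.2.2) hdet

end NulExtension

theorem univ_nonempty_of_decided_EMC {ar : ℕ → ℕ} {τ : Vocab} {A : Struc} {φ : MSO}
    {X : Finset ℕ} (harity : ∀ R ∈ τ.rels, 1 ≤ ar R)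
    (hA : ∀ d x, A.nul d = some x → x ∈ A.univ) (hφ : φ.wf ar τ)
    (hdet : (EMC φ A X).Decided) : A.univ.Nonempty := by
  induction φ generalizing τ A with
  | atom R cs | natom R cs =>
    obtain ⟨hR, hlen, -⟩ := hφ
    simp only [EMC] at hdet
    by_cases hint : ∀ d ∈ cs, (A.nul d).isSome
    swap
    · exact absurd hdet (by rw [if_neg hint]; exact not_decided_node_none _ _)
    obtain ⟨d, hd⟩ := List.exists_mem_of_length_pos (hlen ▸ harity R hR)
    obtain ⟨x, hx⟩ := Option.isSome_iff_exists.1 (hint d hd)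
    exact ⟨x, hA d x hx⟩
  | conj φ ψ ihφ ihψ | disj φ ψ ihφ ihψ =>
    obtain ⟨χ, hχ, hdχ⟩ := hdet.exists_mem_of_node (l := [φ, ψ]) (f := (EMC · A X)) (by simp)
    simp only [List.mem_cons, List.not_mem_nil, or_false] at hχ
    rcases hχ with rfl | rfl
    exacts [ihφ harity hA hφ.1 hdχ, ihψ harity hA hφ.2 hdχ]
  | fall d φ ih | fex d φ ih =>
    obtain ⟨u, hu, hdu⟩ := hdet.exists_mem_of_node (List.cons_ne_nil _ _)
    refine ih (τ := τ.addNul d) (A := A.addNul d u) harity (fun e x hx => ?_) hφ.2 hdu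
    simp only [Struc.addNul] at hx ⊢
    split_ifs at hx
    · subst hx
      simpa using hu
    · exact hA e x hx
  | sall R φ ih | sex R φ ih =>
    obtain ⟨U, -, hdU⟩ :=
      hdet.exists_mem_of_node (by simp [(Finset.powerset_nonempty _).ne_empty])
    refine ih (A := A.addRel R U) (fun S hS => ?_) hA hφ.2.2 hdU
    rcases Finset.mem_insert.1 hS with rfl | hS
    exacts [hφ.2.1.ge, harity S hS]

theorem statement_1_general (ar : ℕ → ℕ) (τ : Vocab) (A₁ A₂ : Struc) (c : ℕ)
    (X : Finset ℕ) (φ : MSO)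
    (harity : ∀ R ∈ τ.rels, 1 ≤ ar R)
    (h₁ : A₁.WF ar)
    (hc : c ∈ τ.nulls) (hcnil : A₁.nul c = none)
    (huniv : A₁.univ = A₂.univ)
    (hrel : ∀ R ∈ τ.rels, A₁.rel R = A₂.rel R)
    (hnul : ∀ d ∈ τ.nulls, d ≠ c → A₁.nul d = A₂.nul d)
    (hφ : MSO.wf ar τ φ)
    (hdet : Game.eval (EMC φ A₁ X) = Game.top ∨ Game.eval (EMC φ A₁ X) = Game.bot) :
    A₁.univ.Nonempty ∧ Game.eval (EMC φ A₁ X) = Game.eval (EMC φ A₂ X) :=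
  ⟨univ_nonempty_of_decided_EMC harity (fun d x hx => (h₁.nul_wf d x hx).2) hφ hdet,
    (NulExtension.eval_EMC_eq ⟨hcnil, huniv, hrel, hnul⟩ hc hφ X hdet).symm⟩

/-- If `𝔄₁` has `c` uninterpreted and agrees with `𝔄₂` on
everything else, and `eval(EMC(𝔄₁, X, φ)) ∈ {⊤, ⊥}`, then `A₁ ≠ ∅` and
`eval(EMC(𝔄₁, X, φ)) = eval(EMC(𝔄₂, X, φ))`. -/
theorem statement_1 (ar : ℕ → ℕ) (τ : Vocab) (A₁ A₂ : Struc) (c : ℕ)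
    (X : Finset ℕ) (φ : MSO)
    (harity : ∀ R ∈ τ.rels, 1 ≤ ar R)
    (h₁ : A₁.WF ar) (h₂ : A₂.WF ar) (hv₁ : A₁.voc = τ) (hv₂ : A₂.voc = τ)
    (hc : c ∈ τ.nulls) (hcnil : A₁.nul c = none)
    (huniv : A₁.univ = A₂.univ)
    (hrel : ∀ R ∈ τ.rels, A₁.rel R = A₂.rel R)
    (hnul : ∀ d ∈ τ.nulls, d ≠ c → A₁.nul d = A₂.nul d)
    (hX : X ⊆ A₁.univ) (hφ : MSO.wf ar τ φ)
    (hdet : Game.eval (EMC φ A₁ X) = Game.top ∨ Game.eval (EMC φ A₁ X) = Game.bot) :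
    A₁.univ.Nonempty ∧ Game.eval (EMC φ A₁ X) = Game.eval (EMC φ A₂ X) :=
  statement_1_general ar τ A₁ A₂ c X φ harity h₁ hc hcnil huniv hrel hnul hφ hdet

end MSOG
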